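/- arXiv:2512.12369 — 4 statements merged into one kernel-verified Lean document; each statement's English description precedes it below -/
import Mathlib

section
/- Every symmetric convex polygon in the plane (centrally symmetric with respect to the origin) is a finite Minkowski sum of centrally symmetric segments. -/
/-!
Write `P = convexHull ℝ S` with `S` finite and `-S = S`, and induct on the number of points of
`S`. If `S` lies on a line through `0`, then `P` is a segment `[-a, a]`. Otherwise `P` has an
edge `[m - v, m + v]` whose supporting line is `σ = 1`, where `(σ, τ)` are the coordinates in the
basis `(m, v)`. Moving every point of `S` with `|τ| ≥ 1` by `v` towards the line `τ = 0` (and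
discarding the others) gives a symmetric set `T` in which both endpoints of the edge have become
`m`, so `T` has fewer points, and `P = convexHull ℝ T + [-v, v]`: a point `x` of `S` with
`|τ x| ≥ 1` lies in `T ± v`, the remaining ones lie in `[-m, m] + [-v, v]`, and `T ± v ⊆ P`
because `x ∓ 2 • v` lies on the segment from `x` to the side `[m ∓ v, -m ∓ v]` of the
parallelogram spanned by the edge and its reflection.
-/

open Pointwise Module

theorem neg_eq_of_forall_neg_mem {α : Type*} [InvolutiveNeg α] {s : Set α}
    (h : ∀ x ∈ s, -x ∈ s) : -s = s :=
  Set.Subset.antisymm (fun x hx => by simpa using h (-x) hx) fun x hx => by simpa using h x hx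

theorem Module.Basis.coord_zero_smul_add_coord_one_smul {R M : Type*} [CommSemiring R]
    [AddCommMonoid M] [Module R M] (B : Basis (Fin 2) R M) (x : M) :
    B.coord 0 x • B 0 + B.coord 1 x • B 1 = x := by
  simpa only [Fin.sum_univ_two, Basis.coord_apply] using B.sum_repr x

section Convex

variable {𝕜 V : Type*} [Field 𝕜] [LinearOrder 𝕜] [IsStrictOrderedRing 𝕜]
  [AddCommGroup V] [Module 𝕜 V]

theorem smul_mem_segment_neg_self {t : 𝕜} (ht : |t| ≤ 1) (x : V) : t • x ∈ segment 𝕜 (-x) x := by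
  obtain ⟨h₁, h₂⟩ := abs_le.1 ht
  exact ⟨(1 - t) / 2, (1 + t) / 2, by linarith, by linarith, by ring, by module⟩

theorem convexHull_eq_convexHull_add_segment {S T : Set V} {v : V}
    (hT : ∀ y ∈ T, y + v ∈ convexHull 𝕜 S ∧ y - v ∈ convexHull 𝕜 S)
    (hS : S ⊆ convexHull 𝕜 T + segment 𝕜 (-v) v) :
    convexHull 𝕜 S = convexHull 𝕜 T + segment 𝕜 (-v) v := by
  have hsum : convexHull 𝕜 T + segment 𝕜 (-v) v = convexHull 𝕜 (T + {-v, v}) := by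
    rw [convexHull_add, convexHull_pair]
  rw [hsum] at hS ⊢
  refine (convexHull_min hS (convex_convexHull 𝕜 _)).antisymm
    (convexHull_min ?_ (convex_convexHull 𝕜 S))
  rintro _ ⟨y, hy, w, rfl | rfl, rfl⟩
  · simpa [sub_eq_add_neg] using (hT y hy).2
  · exact (hT y hy).1

theorem Convex.smul_add_smul_sub_two_smul_mem {C : Set V} (hC : Convex 𝕜 C) {m v : V} {s d : 𝕜}
    (hs : |s| ≤ 1) (hd : 1 ≤ d) (hx : s • m + d • v ∈ C) (hm : m - v ∈ C) (hm' : -m - v ∈ C) :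
    s • m + (d - 2) • v ∈ C := by
  obtain ⟨h₁, h₂⟩ := abs_le.1 hs
  -- `s • m - v` lies on `[m - v, -m - v]`, and `s • m + (d - 2) • v` between `x` and that point.
  have hp : s • m - v ∈ C := by
    convert hC hm hm' (a := (1 + s) / 2) (b := (1 - s) / 2) (by linarith) (by linarith)
      (by ring) using 1
    module
  have hd' : d + 1 ≠ 0 := by linarith
  convert hC hx hp (a := (d - 1) / (d + 1)) (b := 2 / (d + 1))
    (div_nonneg (by linarith) (by linarith)) (div_nonneg (by norm_num) (by linarith))
    (by field_simp; ring) using 1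
  have e₁ : (d - 1) / (d + 1) * s + 2 / (d + 1) * s = s := by field_simp; ring
  have e₂ : (d - 1) / (d + 1) * d - 2 / (d + 1) = d - 2 := by field_simp; ring
  linear_combination (norm := module) -e₁ • m - e₂ • v

/-- Rotate the supporting line `f = 1` about `a` until it meets a second point `b` of `S`. -/
theorem exists_rotated_support {S : Set V} (hS : S.Finite) {a : V}
    {f g : V →ₗ[𝕜] 𝕜} (hfa : f a = 1) (hga : g a = 0) (hf : ∀ x ∈ S, f x ≤ 1)
    (hg : ∃ y ∈ S, 0 < g y) :
    ∃ b ∈ S, b ≠ a ∧ ∃ l : V →ₗ[𝕜] 𝕜, l a = 1 ∧ l b = 1 ∧ ∀ x ∈ S, l x ≤ 1 := by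
  obtain ⟨y, hy, hgy⟩ := hg
  obtain ⟨b, ⟨hb, hgb⟩, hmin⟩ := Set.exists_min_image {x ∈ S | 0 < g x}
    (fun x => (1 - f x) / g x) (hS.subset (Set.sep_subset _ _)) ⟨y, hy, hgy⟩
  set t := (1 - f b) / g b
  have ht : 0 ≤ t := div_nonneg (by linarith [hf b hb]) hgb.le
  refine ⟨b, hb, fun hba => by simp [hba, hga] at hgb, f + t • g, by simp [hfa, hga], ?_, ?_⟩
  · simp only [LinearMap.add_apply, LinearMap.smul_apply, smul_eq_mul, t]
    field_simp
    ring
  intro x hx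
  simp only [LinearMap.add_apply, LinearMap.smul_apply, smul_eq_mul]
  rcases le_or_gt (g x) 0 with hgx | hgx
  · nlinarith [hf x hx]
  · linarith [(le_div_iff₀ hgx).1 (hmin x ⟨hx, hgx⟩)]

/-- `[B 0 - B 1, B 0 + B 1]` is an edge of `convexHull S`, supported by the line on which the
first coordinate is `1`. -/
def IsEdgeFrame (B : Basis (Fin 2) 𝕜 V) (S : Set V) : Prop :=
  B 0 - B 1 ∈ S ∧ B 0 + B 1 ∈ S ∧ ∀ x ∈ S, B.coord 0 x ≤ 1

theorem exists_isEdgeFrame (hV : finrank 𝕜 V = 2) {S : Set V} {a b : V} (ha : a ∈ S)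
    (hb : b ∈ S) (hab : a ≠ b) {l : V →ₗ[𝕜] 𝕜} (hla : l a = 1) (hlb : l b = 1)
    (hl : ∀ x ∈ S, l x ≤ 1) : ∃ B : Basis (Fin 2) 𝕜 V, IsEdgeFrame B S := by
  set m := (2 : 𝕜)⁻¹ • (a + b)
  set v := (2 : 𝕜)⁻¹ • (b - a)
  have hlm : l m = 1 := by simp [m, hla, hlb]; norm_num
  have hlv : l v = 0 := by simp [v, hla, hlb]
  have hv : v ≠ 0 := smul_ne_zero (by norm_num) (sub_ne_zero.2 hab.symm)
  have hli : LinearIndependent 𝕜 ![m, v] := LinearIndependent.pair_iff.2 fun s t hst => by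
    have hs : s = 0 := by simpa [hlm, hlv] using congrArg l hst
    subst hs
    simp only [zero_smul, zero_add, smul_eq_zero] at hst
    exact ⟨rfl, hst.resolve_right hv⟩
  set B := basisOfLinearIndependentOfCardEqFinrank hli (by simp [hV])
  have hB0 : B 0 = m := by simp [B]
  have hB1 : B 1 = v := by simp [B]
  have hcoord : B.coord 0 = l := B.ext fun i => by
    rw [Basis.coord_apply, B.repr_self]
    fin_cases i <;> simp [hB0, hB1, hlm, hlv]
  refine ⟨B, ?_, ?_, hcoord ▸ hl⟩
  · convert ha using 1
    simp only [hB0, hB1, m, v]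
    module
  · convert hb using 1
    simp only [hB0, hB1, m, v]
    module

noncomputable def shrinkAlong (B : Basis (Fin 2) 𝕜 V) (x : V) : V :=
  if 0 ≤ B.coord 1 x then x - B 1 else x + B 1

noncomputable def shrinkSet (B : Basis (Fin 2) 𝕜 V) (S : Set V) : Set V :=
  shrinkAlong B '' {x ∈ S | 1 ≤ |B.coord 1 x|}

section EdgeFrame

variable {B : Basis (Fin 2) 𝕜 V} {S : Set V}

theorem shrinkAlong_neg {x : V} (hx : B.coord 1 x ≠ 0) :
    shrinkAlong B (-x) = -shrinkAlong B x := by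
  unfold shrinkAlong
  rw [map_neg]
  rcases hx.lt_or_gt with h | h
  · rw [if_pos (neg_nonneg.2 h.le), if_neg h.not_ge]
    abel
  · rw [if_neg (neg_neg_of_pos h).not_ge, if_pos h.le]
    abel

theorem shrinkAlong_sub_self : shrinkAlong B (B 0 - B 1) = B 0 := by
  simp [shrinkAlong]

theorem shrinkAlong_add_self : shrinkAlong B (B 0 + B 1) = B 0 := by
  simp [shrinkAlong]

theorem IsEdgeFrame.abs_coord_zero_le_one (hB : IsEdgeFrame B S) (hsymm : -S = S) {x : V}
    (hx : x ∈ S) : |B.coord 0 x| ≤ 1 := by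
  have hnx : -x ∈ S := hsymm ▸ Set.neg_mem_neg.2 hx
  have := hB.2.2 (-x) hnx
  rw [map_neg] at this
  exact abs_le.2 ⟨by linarith, hB.2.2 x hx⟩

theorem IsEdgeFrame.shrinkAlong_add_mem_and_sub_mem (hB : IsEdgeFrame B S) (hsymm : -S = S)
    {x : V} (hx : x ∈ S) (hτ : 1 ≤ |B.coord 1 x|) :
    shrinkAlong B x + B 1 ∈ convexHull 𝕜 S ∧ shrinkAlong B x - B 1 ∈ convexHull 𝕜 S := by
  have hC := convex_convexHull 𝕜 S
  have hmem : ∀ y ∈ S, y ∈ convexHull 𝕜 S := subset_convexHull 𝕜 S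
  have hneg : ∀ y ∈ S, -y ∈ convexHull 𝕜 S := fun y hy => hmem _ (hsymm ▸ Set.neg_mem_neg.2 hy)
  have hσ := hB.abs_coord_zero_le_one hsymm hx
  have hrepr := B.coord_zero_smul_add_coord_one_smul x
  have hxC : B.coord 0 x • B 0 + B.coord 1 x • B 1 ∈ convexHull 𝕜 S := by
    rw [hrepr]
    exact hmem x hx
  unfold shrinkAlong
  split_ifs with h
  · refine ⟨by simpa using hmem x hx, ?_⟩
    have := hC.smul_add_smul_sub_two_smul_mem hσ (by rwa [abs_of_nonneg h] at hτ) hxC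
      (hmem _ hB.1) (by simpa [neg_add_eq_sub] using hneg _ hB.2.1)
    rw [← hrepr]
    convert this using 1
    module
  · refine ⟨?_, by simpa using hmem x hx⟩
    have := hC.smul_add_smul_sub_two_smul_mem (m := B 0) (v := -B 1) (d := -B.coord 1 x) hσ
      (by rwa [abs_of_neg (not_le.1 h)] at hτ) (by simpa using hxC)
      (by simpa using hmem _ hB.2.1) (by simpa [neg_add_eq_sub] using hneg _ hB.1)
    rw [← hrepr]
    convert this using 1
    module

theorem IsEdgeFrame.mem_shrinkSet (hB : IsEdgeFrame B S) : B 0 ∈ shrinkSet B S :=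
  ⟨B 0 - B 1, ⟨hB.1, by simp⟩, shrinkAlong_sub_self⟩

theorem IsEdgeFrame.neg_mem_shrinkSet (hB : IsEdgeFrame B S) (hsymm : -S = S) :
    -B 0 ∈ shrinkSet B S :=
  ⟨-(B 0 - B 1), ⟨hsymm ▸ Set.neg_mem_neg.2 hB.1, by simp⟩,
    by rw [shrinkAlong_neg (by simp), shrinkAlong_sub_self]⟩

theorem IsEdgeFrame.subset_convexHull_shrinkSet_add_segment (hB : IsEdgeFrame B S)
    (hsymm : -S = S) : S ⊆ convexHull 𝕜 (shrinkSet B S) + segment 𝕜 (-B 1) (B 1) := by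
  intro x hx
  by_cases hτ : 1 ≤ |B.coord 1 x|
  · have hT : shrinkAlong B x ∈ convexHull 𝕜 (shrinkSet B S) :=
      subset_convexHull 𝕜 _ ⟨x, ⟨hx, hτ⟩, rfl⟩
    unfold shrinkAlong at hT
    split_ifs at hT
    · simpa using Set.add_mem_add hT (right_mem_segment 𝕜 (-B 1) (B 1))
    · simpa using Set.add_mem_add hT (left_mem_segment 𝕜 (-B 1) (B 1))
  · have hmid : segment 𝕜 (-B 0) (B 0) ⊆ convexHull 𝕜 (shrinkSet B S) :=
      segment_subset_convexHull (hB.neg_mem_shrinkSet hsymm) hB.mem_shrinkSet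
    rw [← B.coord_zero_smul_add_coord_one_smul x]
    exact Set.add_mem_add (hmid (smul_mem_segment_neg_self (hB.abs_coord_zero_le_one hsymm hx) _))
      (smul_mem_segment_neg_self (not_le.1 hτ).le _)

theorem IsEdgeFrame.convexHull_eq_convexHull_shrinkSet_add_segment (hB : IsEdgeFrame B S)
    (hsymm : -S = S) :
    convexHull 𝕜 S = convexHull 𝕜 (shrinkSet B S) + segment 𝕜 (-B 1) (B 1) :=
  convexHull_eq_convexHull_add_segment
    (by
      rintro _ ⟨x, ⟨hx, hτ⟩, rfl⟩
      exact hB.shrinkAlong_add_mem_and_sub_mem hsymm hx hτ)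
    (hB.subset_convexHull_shrinkSet_add_segment hsymm)

theorem neg_shrinkSet (hsymm : -S = S) : -shrinkSet B S = shrinkSet B S := by
  refine neg_eq_of_forall_neg_mem ?_
  rintro _ ⟨x, ⟨hx, hτ⟩, rfl⟩
  have hτ0 : B.coord 1 x ≠ 0 := by
    rintro h
    rw [h, abs_zero] at hτ
    exact absurd hτ (by norm_num)
  exact ⟨-x, ⟨hsymm ▸ Set.neg_mem_neg.2 hx, by simpa using hτ⟩, shrinkAlong_neg hτ0⟩

theorem IsEdgeFrame.ncard_shrinkSet_lt (hB : IsEdgeFrame B S) (hS : S.Finite) :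
    (shrinkSet B S).ncard < S.ncard := by
  have hS₀ : {x ∈ S | 1 ≤ |B.coord 1 x|}.Finite := hS.subset (Set.sep_subset _ _)
  refine lt_of_lt_of_le (lt_of_le_of_ne (Set.ncard_image_le hS₀) fun h => ?_)
    (Set.ncard_le_ncard (Set.sep_subset _ _) hS)
  have := Set.injOn_of_ncard_image_eq h hS₀ ⟨hB.1, by simp⟩ ⟨hB.2.1, by simp⟩
    (shrinkAlong_sub_self.trans shrinkAlong_add_self.symm)
  have h₁ : (-1 : 𝕜) = 1 := by simpa using congrArg (B.coord 1) this
  linarith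

end EdgeFrame

end Convex

theorem mem_segment_neg_of_sq_le_of_mul_eq {a x : ℝ × ℝ}
    (hq : x.1 ^ 2 + x.2 ^ 2 ≤ a.1 ^ 2 + a.2 ^ 2) (hc : a.1 * x.2 = a.2 * x.1) : x ∈ segment ℝ (-a) a := by
  rcases eq_or_ne a 0 with rfl | ha
  · have hx : x = 0 := by
      simp only [Prod.fst_zero, Prod.snd_zero] at hq
      exact Prod.ext (by simp; nlinarith) (by simp; nlinarith)
    simp [hx]
  set N := a.1 ^ 2 + a.2 ^ 2
  have hN : 0 < N := by
    rcases ne_or_eq a.1 0 with h | h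
    · positivity
    · have : a.2 ≠ 0 := fun h' => ha (Prod.ext h h')
      positivity
  have hx : x = ((a.1 * x.1 + a.2 * x.2) / N) • a := by
    ext
    · simp only [Prod.smul_fst, smul_eq_mul]
      field_simp
      linear_combination (-a.2) * hc
    · simp only [Prod.smul_snd, smul_eq_mul]
      field_simp
      linear_combination a.1 * hc
  rw [hx]
  refine smul_mem_segment_neg_self ?_ a
  rw [abs_div, abs_of_pos hN, div_le_one hN, abs_le]
  constructor <;> nlinarith [sq_nonneg (a.1 - x.1), sq_nonneg (a.2 - x.2), sq_nonneg (a.1 + x.1),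
    sq_nonneg (a.2 + x.2)]

theorem exists_subset_segment_or_isEdgeFrame {S : Set (ℝ × ℝ)} (hS : S.Finite) (hsymm : -S = S)
    (hne : S.Nonempty) :
    (∃ a ∈ S, S ⊆ segment ℝ (-a) a) ∨ ∃ B : Basis (Fin 2) ℝ (ℝ × ℝ), IsEdgeFrame B S := by
  obtain ⟨a, ha, hmax⟩ := Set.exists_max_image S (fun x : ℝ × ℝ => x.1 ^ 2 + x.2 ^ 2) hS hne
  by_cases hdeg : ∀ x ∈ S, a.1 * x.2 = a.2 * x.1
  · exact Or.inl ⟨a, ha, fun x hx => mem_segment_neg_of_sq_le_of_mul_eq (hmax x hx) (hdeg x hx)⟩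
  push Not at hdeg
  obtain ⟨y, hy, hya⟩ := hdeg
  set N := a.1 ^ 2 + a.2 ^ 2
  have hN : 0 < N := by
    by_contra h
    have h₁ : a.1 = 0 := by nlinarith [sq_nonneg a.1, sq_nonneg a.2]
    have h₂ : a.2 = 0 := by nlinarith [sq_nonneg a.1, sq_nonneg a.2]
    simp [h₁, h₂] at hya
  let f : ℝ × ℝ →ₗ[ℝ] ℝ := N⁻¹ • (a.1 • LinearMap.fst ℝ ℝ ℝ + a.2 • LinearMap.snd ℝ ℝ ℝ)
  let g : ℝ × ℝ →ₗ[ℝ] ℝ := a.1 • LinearMap.snd ℝ ℝ ℝ - a.2 • LinearMap.fst ℝ ℝ ℝ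
  have hfa : f a = 1 := by
    simp only [f, LinearMap.smul_apply, LinearMap.add_apply, LinearMap.fst_apply,
      LinearMap.snd_apply, smul_eq_mul]
    field_simp
    ring
  have hf : ∀ x ∈ S, f x ≤ 1 := fun x hx => by
    simp only [f, LinearMap.smul_apply, LinearMap.add_apply, LinearMap.fst_apply,
      LinearMap.snd_apply, smul_eq_mul]
    rw [inv_mul_le_iff₀ hN]
    nlinarith [hmax x hx, sq_nonneg (a.1 - x.1), sq_nonneg (a.2 - x.2)]
  have hg : ∃ x ∈ S, 0 < g x := by
    rcases hya.lt_or_gt with h | h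
    · exact ⟨-y, hsymm ▸ Set.neg_mem_neg.2 hy, by simp [g]; linarith⟩
    · exact ⟨y, hy, by simp [g]; linarith⟩
  obtain ⟨b, hb, hba, l, hla, hlb, hl⟩ :=
    exists_rotated_support hS hfa (by simp [g]; ring) hf hg
  exact Or.inr (exists_isEdgeFrame (by simp) ha hb hba.symm hla hlb hl)

def IsZonotope {V : Type*} [AddCommGroup V] [Module ℝ V] (P : Set V) : Prop :=
  ∃ (n : ℕ) (v : Fin n → V), P = ∑ i, segment ℝ (-(v i)) (v i)

section Zonotope

variable {V : Type*} [AddCommGroup V] [Module ℝ V]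

theorem isZonotope_segment (v : V) : IsZonotope (segment ℝ (-v) v) :=
  ⟨1, fun _ => v, by simp⟩

theorem IsZonotope.add_segment {P : Set V} (hP : IsZonotope P) (v : V) :
    IsZonotope (P + segment ℝ (-v) v) := by
  obtain ⟨n, w, rfl⟩ := hP
  exact ⟨n + 1, Fin.snoc w v, by simp [Fin.sum_univ_castSucc]⟩

end Zonotope

theorem isZonotope_convexHull_of_neg_eq {S : Set (ℝ × ℝ)} (hS : S.Finite) (hsymm : -S = S)
    (hne : S.Nonempty) : IsZonotope (convexHull ℝ S) := by
  induction hn : S.ncard using Nat.strong_induction_on generalizing S with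
  | _ n ih =>
    rcases exists_subset_segment_or_isEdgeFrame hS hsymm hne with ⟨a, ha, hsub⟩ | ⟨B, hB⟩
    · rw [(convexHull_min hsub (convex_segment _ _)).antisymm
        (segment_subset_convexHull (hsymm ▸ Set.neg_mem_neg.2 ha) ha)]
      exact isZonotope_segment a
    · rw [hB.convexHull_eq_convexHull_shrinkSet_add_segment hsymm]
      exact (ih _ (hn ▸ hB.ncard_shrinkSet_lt hS) ((hS.subset (Set.sep_subset _ _)).image _)
        (neg_shrinkSet hsymm) ⟨_, hB.mem_shrinkSet⟩ rfl).add_segment _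

/-- Every (nonempty) centrally symmetric convex polygon in the plane is a finite Minkowski
sum of centrally symmetric segments. -/
theorem symmetric_polygon_is_zonotope
    (S : Set (ℝ × ℝ)) (hS : S.Finite)
    (P : Set (ℝ × ℝ)) (hP : P = convexHull ℝ S)
    (hsym : -P = P) (hne : P.Nonempty) :
    ∃ (n : ℕ) (v : Fin n → ℝ × ℝ),
      P = ∑ i : Fin n, segment ℝ (-(v i)) (v i) := by
  have hSP : S ⊆ P := hP ▸ subset_convexHull ℝ S
  have hhull : convexHull ℝ (S ∪ -S) = P := by
    refine (convexHull_min (Set.union_subset hSP ?_) (hP ▸ convex_convexHull ℝ S)).antisymm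
      (hP ▸ convexHull_mono Set.subset_union_left)
    exact hsym ▸ Set.neg_subset_neg.2 hSP
  rw [← hhull]
  refine isZonotope_convexHull_of_neg_eq (hS.union hS.neg) ?_ ?_
  · rw [Set.union_neg, neg_neg, Set.union_comm]
  · rw [hP] at hne
    exact (convexHull_nonempty_iff.1 hne).mono Set.subset_union_left
end

section
/- For a function β : X × X → ℝ that is symmetric, non-negative, and equal to 1 on the diagonal, β is a kernel of hyperbolic type (i.e., Σ_{i,j} c_i c_j β(x_i,x_j) ≤ (Σ_k c_k β(x_k,x₀))² for all finite families) if and only if for some (equivalently, every) z ∈ X, the function N_z(x,y) := β(x,z)β(y,z) − β(x,y) is a kernel of positive type. -/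
/-- A kernel of positive type on a set `X`. -/
def IsPositiveTypeKernel {X : Type*} (N : X → X → ℝ) : Prop :=
  (∀ x y, N x y = N y x) ∧
    ∀ (n : ℕ) (x : Fin n → X) (c : Fin n → ℝ),
      0 ≤ ∑ i, ∑ j, c i * c j * N (x i) (x j)

/-- A kernel of hyperbolic type on a set `X`. -/
def IsHyperbolicTypeKernel {X : Type*} (β : X → X → ℝ) : Prop :=
  ∀ (n : ℕ) (x₀ : X) (x : Fin n → X) (c : Fin n → ℝ),
    ∑ i, ∑ j, c i * c j * β (x i) (x j) ≤ (∑ k, c k * β (x k) x₀) ^ 2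

private lemma sum_expand (n : ℕ) (c A : Fin n → ℝ) (B : Fin n → Fin n → ℝ) :
    ∑ i, ∑ j, c i * c j * (A i * A j - B i j)
      = (∑ i, c i * A i) ^ 2 - ∑ i, ∑ j, c i * c j * B i j := by
  have h : (∑ i, c i * A i) ^ 2 = ∑ i, ∑ j, c i * c j * (A i * A j) := by
    rw [sq, Finset.sum_mul_sum]
    exact Finset.sum_congr rfl fun i _ => Finset.sum_congr rfl fun j _ => by ring
  simp only [mul_sub, Finset.sum_sub_distrib, h]

private lemma fwd {X : Type*} (β : X → X → ℝ)
    (hsym : ∀ x y, β x y = β y x) (hyp : IsHyperbolicTypeKernel β) (z : X) :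
    IsPositiveTypeKernel (fun x y => β x z * β y z - β x y) := by
  refine ⟨fun x y => by dsimp only; rw [hsym x y]; ring, fun n x c => ?_⟩
  show 0 ≤ ∑ i, ∑ j, c i * c j * (β (x i) z * β (x j) z - β (x i) (x j))
  rw [sum_expand n c (fun i => β (x i) z) (fun i j => β (x i) (x j))]
  have h := hyp n z x c
  linarith

private lemma key {X : Type*} (β : X → X → ℝ)
    (hsym : ∀ x y, β x y = β y x) (hnonneg : ∀ x y, 0 ≤ β x y)
    (hdiag : ∀ x, β x x = 1) (z : X)
    (hz : IsPositiveTypeKernel (fun x y => β x z * β y z - β x y)) :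
    IsHyperbolicTypeKernel β := by
  intro n x₀ x c
  set S₀ := ∑ k, c k * β (x k) x₀ with hS₀
  set Sz := ∑ k, c k * β (x k) z with hSz
  set Q := ∑ i, ∑ j, c i * c j * β (x i) (x j) with hQ
  set b := β x₀ z with hb
  have hb1 : 1 ≤ b := by
    have h := hz.2 1 (fun _ => x₀) (fun _ => 1)
    simp only [Fin.sum_univ_one, one_mul] at h
    rw [hdiag x₀] at h
    nlinarith [hnonneg x₀ z]
  have step2 : ∀ t : ℝ, Q + 2*t*S₀ + t^2 ≤ (Sz + t * b)^2 := by
    intro t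
    have h := hz.2 (n+1) (Fin.cases x₀ x) (Fin.cases t c)
    simp only at h
    rw [sum_expand (n+1) (Fin.cases t c) (fun i => β (Fin.cases x₀ x i) z)
      (fun i j => β (Fin.cases x₀ x i) (Fin.cases x₀ x j))] at h
    have h1 : (∑ i : Fin (n+1), Fin.cases t c i * β (Fin.cases x₀ x i) z)
        = t * b + Sz := by
      rw [Fin.sum_univ_succ]
      simp only [Fin.cases_zero, Fin.cases_succ, hSz, hb]
    have h2 : (∑ i : Fin (n+1), ∑ j : Fin (n+1),
        Fin.cases t c i * Fin.cases t c j *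
          β (Fin.cases x₀ x i) (Fin.cases x₀ x j)) = t^2 + 2*t*S₀ + Q := by
      simp only [Fin.sum_univ_succ, Fin.cases_zero, Fin.cases_succ,
        Finset.sum_add_distrib]
      rw [hdiag x₀]
      have e1 : ∑ j : Fin n, t * c j * β x₀ (x j) = t * S₀ := by
        rw [hS₀, Finset.mul_sum]
        exact Finset.sum_congr rfl fun j _ => by rw [hsym x₀ (x j)]; ring
      have e2 : ∑ i : Fin n, c i * t * β (x i) x₀ = t * S₀ := by
        rw [hS₀, Finset.mul_sum]
        exact Finset.sum_congr rfl fun j _ => by ring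
      rw [e1, e2, ← hQ]
      ring
    rw [h1, h2] at h
    nlinarith [h]
  show Q ≤ S₀ ^ 2
  by_cases hbe : b = 1
  · have h := step2 (-(Sz + S₀)/2)
    rw [hbe] at h
    nlinarith [h]
  · have hd : b - 1 > 0 := lt_of_le_of_ne (by linarith) (fun e => hbe (by linarith))
    have hdne : b - 1 ≠ 0 := ne_of_gt hd
    set t := (S₀ - Sz) / (b - 1) with ht
    have h := step2 t
    have keyeq : (Sz + t * b)^2 - t^2 - 2*t*S₀ = S₀^2 := by
      rw [ht]
      field_simp
      ring
    linarith

/-- A symmetric non-negative kernel `β` with `β(x,x) = 1` is of hyperbolic type iff for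
some (equivalently, every) `z`, the kernel `N_z(x,y) = β(x,z)β(y,z) - β(x,y)` is of
positive type. -/
theorem hyperbolicTypeKernel_iff_positiveTypeKernel
    {X : Type*} [Nonempty X] (β : X → X → ℝ)
    (hsym : ∀ x y, β x y = β y x) (hnonneg : ∀ x y, 0 ≤ β x y)
    (hdiag : ∀ x, β x x = 1) :
    (IsHyperbolicTypeKernel β ↔
      ∀ z : X, IsPositiveTypeKernel (fun x y => β x z * β y z - β x y)) ∧
    (IsHyperbolicTypeKernel β ↔
      ∃ z : X, IsPositiveTypeKernel (fun x y => β x z * β y z - β x y)) := by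
  constructor
  · constructor
    · intro hyp z
      exact fwd β hsym hyp z
    · intro h
      exact key β hsym hnonneg hdiag (Classical.arbitrary X) (h _)
  · constructor
    · intro hyp
      exact ⟨Classical.arbitrary X, fwd β hsym hyp _⟩
    · rintro ⟨z, hz⟩
      exact key β hsym hnonneg hdiag z hz
end

section
/- The restriction of the Lorentzian form B to the hyperboloid ℍ = {x ∈ ℝ ⊕ H : x₀ > 0, B(x,x) = 1} is a kernel of hyperbolic type: for all x₀, x₁, ..., xₙ ∈ ℍ and c₁, ..., cₙ ∈ ℝ, Σ_{i,j} c_i c_j B(x_i, x_j) ≤ (Σ_k c_k B(x_k, x₀))². -/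
open scoped RealInnerProductSpace

/-- The restriction of the Lorentzian form `B` to the upper hyperboloid
`{x : x₀ > 0, B(x,x) = 1}` in `ℝ ⊕ H` is a kernel of hyperbolic type. -/
theorem lorentz_form_hyperbolic_type_kernel
    {H : Type*} [NormedAddCommGroup H] [InnerProductSpace ℝ H]
    (B : (ℝ × H) → (ℝ × H) → ℝ)
    (hB : ∀ x y : ℝ × H, B x y = x.1 * y.1 - ⟪x.2, y.2⟫)
    (n : ℕ) (x₀ : ℝ × H) (x : Fin n → ℝ × H)
    (hx₀ : 0 < x₀.1 ∧ B x₀ x₀ = 1)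
    (hx : ∀ i, 0 < (x i).1 ∧ B (x i) (x i) = 1)
    (c : Fin n → ℝ) :
    ∑ i, ∑ j, c i * c j * B (x i) (x j) ≤ (∑ k, c k * B (x k) x₀) ^ 2 := by
  obtain ⟨hb, hBx₀⟩ := hx₀
  rw [hB] at hBx₀
  simp only [hB]
  set a : ℝ := ∑ i, c i * (x i).1 with ha
  set u : H := ∑ i, c i • (x i).2 with hu
  set b : ℝ := x₀.1
  set v : H := x₀.2
  have h1 : ∑ i, ∑ j, c i * c j * ((x i).1 * (x j).1 - ⟪(x i).2, (x j).2⟫)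
      = a * a - ⟪u, u⟫ := by
    rw [ha, hu, Finset.sum_mul_sum, sum_inner (𝕜 := ℝ), ← Finset.sum_sub_distrib]
    refine Finset.sum_congr rfl fun i _ => ?_
    rw [inner_sum (𝕜 := ℝ), ← Finset.sum_sub_distrib]
    refine Finset.sum_congr rfl fun j _ => ?_
    rw [real_inner_smul_left, real_inner_smul_right]
    ring
  have h2 : ∑ k, c k * ((x k).1 * b - ⟪(x k).2, v⟫) = a * b - ⟪u, v⟫ := by
    rw [ha, hu, Finset.sum_mul, sum_inner (𝕜 := ℝ), ← Finset.sum_sub_distrib]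
    refine Finset.sum_congr rfl fun i _ => ?_
    rw [real_inner_smul_left]
    ring
  rw [h1, h2]
  have hcs : ⟪u, v⟫ * ⟪u, v⟫ ≤ ⟪u, u⟫ * ⟪v, v⟫ := real_inner_mul_inner_self_le u v
  have hp : (0:ℝ) ≤ ⟪u, u⟫ := real_inner_self_nonneg
  have hq : (0:ℝ) ≤ ⟪v, v⟫ := real_inner_self_nonneg
  set t : ℝ := ⟪u, v⟫
  set p : ℝ := ⟪u, u⟫
  set q : ℝ := ⟪v, v⟫
  -- hBx₀ : b * b - q = 1
  have key : q * ((a * b - t) ^ 2 - (a * a - p))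
      = (a * q - t * b) ^ 2 + (p * q - t * t) := by
    linear_combination (q * a * a - t * t) * hBx₀
  rcases hq.eq_or_lt with hq0 | hq0
  · have ht2 : t * t ≤ 0 := by nlinarith
    have ht : t = 0 := by nlinarith [mul_self_nonneg t]
    have hb1 : b * b = 1 := by linarith
    have he : (a * b - t) ^ 2 = a * a := by rw [ht]; linear_combination a * a * hb1
    linarith [he ▸ le_refl ((a*b-t)^2), hp]
  · nlinarith [key, sq_nonneg (a * q - t * b), hcs, hq0]
end

section
/- For every t ≥ 0, (1/2π) ∫₀^{2π} |cosh(t) − sinh(t)e^{iθ}|^{−3} dθ = (1/2π) ∫₀^{2π} √(e^{2t}cos²θ + e^{−2t}sin²θ) dθ, both being equal to (2e^t/π)·E(√(1 − e^{−4t})), where E is the complete elliptic integral of the second kind. -/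
open Real intervalIntegral

/-
Both kernels are functions of a single trigonometric square. With `m = 1 - e^{-4t}` one has
`|cosh t - sinh t e^{2iu}|² = e^{2t}(1 - m cos²u)` and `e^{2t}cos²θ + e^{-2t}sin²θ =
e^{2t}(1 - m sin²θ)`, so after `θ = 2u` and the symmetries of `sin²` the Delzant–Py integral is
`4e^{-3t}∫₀^{π/2}(1 - m sin²u)^{-3/2} du` and the convex-bodies integral is `4eᵗE(m)`. They agree
because `E(m) = (1 - m)∫₀^{π/2}(1 - m sin²u)^{-3/2} du`: the difference of the two integrands is
the derivative of `m sin u cos u / √(1 - m sin²u)`, which vanishes at `0` and `π/2`.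
-/

/-- The complete elliptic integral of the second kind, in terms of the parameter `m = k²`. -/
noncomputable def completeEllipticE (m : ℝ) : ℝ :=
  ∫ u in (0:ℝ)..(π / 2), √(1 - m * sin u ^ 2)

section SinSq

variable (f : ℝ → ℝ)

theorem periodic_comp_sin_sq : Function.Periodic (fun θ => f (sin θ ^ 2)) π := fun θ => by
  simp [sin_add_pi]

theorem integral_comp_cos_sq_zero_pi :
    ∫ θ in (0:ℝ)..π, f (cos θ ^ 2) = ∫ θ in (0:ℝ)..π, f (sin θ ^ 2) := by
  calc ∫ θ in (0:ℝ)..π, f (cos θ ^ 2)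
      = ∫ θ in (0:ℝ)..π, f (sin (θ + π / 2) ^ 2) := by simp only [sin_add_pi_div_two]
    _ = ∫ θ in (π / 2)..(π / 2 + π), f (sin θ ^ 2) := by
        rw [integral_comp_add_right (fun θ => f (sin θ ^ 2)), zero_add, add_comm]
    _ = ∫ θ in (0:ℝ)..π, f (sin θ ^ 2) := by
        simpa using (periodic_comp_sin_sq f).intervalIntegral_add_eq (π / 2) 0

variable {f}

theorem integral_comp_sin_sq_zero_pi (hf : Continuous fun θ => f (sin θ ^ 2)) :
    ∫ θ in (0:ℝ)..π, f (sin θ ^ 2) = 2 * ∫ u in (0:ℝ)..(π / 2), f (sin u ^ 2) := by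
  have hreflect : ∫ θ in (π / 2)..π, f (sin θ ^ 2) = ∫ u in (0:ℝ)..(π / 2), f (sin u ^ 2) := by
    have h := integral_comp_sub_left (a := 0) (b := π / 2) (fun θ => f (sin θ ^ 2)) π
    simp only [sin_pi_sub, sub_zero, sub_half] at h
    exact h.symm
  rw [← integral_add_adjacent_intervals (hf.intervalIntegrable 0 (π / 2))
    (hf.intervalIntegrable (π / 2) π), hreflect, two_mul]

theorem integral_comp_sin_sq_zero_two_pi (hf : Continuous fun θ => f (sin θ ^ 2)) :
    ∫ θ in (0:ℝ)..(2 * π), f (sin θ ^ 2) = 4 * ∫ u in (0:ℝ)..(π / 2), f (sin u ^ 2) := by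
  rw [two_mul, (periodic_comp_sin_sq f).intervalIntegral_add_eq_add 0 π
    fun _ _ => hf.intervalIntegrable _ _, zero_add, integral_comp_sin_sq_zero_pi hf]
  ring

end SinSq

section Elliptic

variable {m : ℝ}

theorem one_sub_mul_sin_sq_pos (hm : m < 1) (u : ℝ) : 0 < 1 - m * sin u ^ 2 := by
  rcases le_or_gt 0 m with h | h
  · nlinarith [sin_sq_le_one u]
  · nlinarith [sq_nonneg (sin u)]

theorem continuous_inv_sqrt_one_sub_mul_sin_sq_pow_three (hm : m < 1) :
    Continuous fun u => (√(1 - m * sin u ^ 2) ^ 3)⁻¹ :=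
  Continuous.inv₀ (by fun_prop) fun u =>
    pow_ne_zero 3 (sqrt_pos.2 (one_sub_mul_sin_sq_pos hm u)).ne'

theorem hasDerivAt_mul_sin_mul_cos_div_sqrt (hm : m < 1) (u : ℝ) :
    HasDerivAt (fun u => m * sin u * cos u / √(1 - m * sin u ^ 2))
      (√(1 - m * sin u ^ 2) - (1 - m) * (√(1 - m * sin u ^ 2) ^ 3)⁻¹) u := by
  have hD := one_sub_mul_sin_sq_pos hm u
  have hnum : HasDerivAt (fun u => m * sin u * cos u)
      (m * cos u * cos u + m * sin u * -sin u) u :=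
    ((hasDerivAt_sin u).const_mul m).mul (hasDerivAt_cos u)
  have hden : HasDerivAt (fun u => √(1 - m * sin u ^ 2))
      (-(m * (2 * sin u * cos u)) / (2 * √(1 - m * sin u ^ 2))) u := by
    simpa using ((((hasDerivAt_sin u).pow 2).const_mul m).const_sub 1).sqrt hD.ne'
  refine (hnum.div hden (sqrt_pos.2 hD).ne').congr_deriv ?_
  have hsq : √(1 - m * sin u ^ 2) ^ 2 = 1 - m * sin u ^ 2 := sq_sqrt hD.le
  field_simp
  linear_combination (m * (cos u ^ 2 - sin u ^ 2) - √(1 - m * sin u ^ 2) ^ 2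
      - (1 - m * sin u ^ 2)) * hsq
    + (m * (1 - m * sin u ^ 2) + m ^ 2 * sin u ^ 2) * sin_sq_add_cos_sq u

theorem completeEllipticE_eq_one_sub_mul_integral (hm : m < 1) :
    completeEllipticE m = (1 - m) * ∫ u in (0:ℝ)..(π / 2), (√(1 - m * sin u ^ 2) ^ 3)⁻¹ := by
  have hcont := continuous_inv_sqrt_one_sub_mul_sin_sq_pow_three hm
  have hFTC := integral_eq_sub_of_hasDerivAt (a := 0) (b := π / 2)
    (fun u _ => hasDerivAt_mul_sin_mul_cos_div_sqrt hm u)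
    (Continuous.intervalIntegrable (by fun_prop) _ _)
  rw [integral_sub (Continuous.intervalIntegrable (by fun_prop) _ _)
    ((hcont.const_mul _).intervalIntegrable _ _), integral_const_mul] at hFTC
  simp only [cos_pi_div_two, sin_zero, mul_zero, zero_mul, zero_div, sub_zero] at hFTC
  exact sub_eq_zero.1 hFTC

end Elliptic

section Kernels

variable (t : ℝ)

theorem norm_cosh_sub_sinh_mul_exp_mul_I_sq (θ : ℝ) :
    ‖(cosh t : ℂ) - sinh t * Complex.exp (θ * Complex.I)‖ ^ 2
      = cosh (2 * t) - sinh (2 * t) * cos θ := by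
  rw [Complex.sq_norm, Complex.exp_mul_I, Complex.normSq_apply]
  simp only [Complex.sub_re, Complex.sub_im, Complex.mul_re, Complex.mul_im, Complex.ofReal_re,
    Complex.ofReal_im, Complex.add_re, Complex.add_im, Complex.I_re, Complex.I_im,
    Complex.cos_ofReal_re, Complex.cos_ofReal_im, Complex.sin_ofReal_re, Complex.sin_ofReal_im]
  linear_combination -cosh_two_mul t + cos θ * sinh_two_mul t + sinh t ^ 2 * sin_sq_add_cos_sq θ

theorem cosh_two_mul_sub_sinh_two_mul_mul_cos_two_mul (u : ℝ) :
    cosh (2 * t) - sinh (2 * t) * cos (2 * u)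
      = exp (2 * t) * (1 - (1 - exp (-(4 * t))) * cos u ^ 2) := by
  have h : exp (2 * t) * exp (-(4 * t)) = exp (-(2 * t)) := by rw [← exp_add]; ring_nf
  rw [cos_two_mul, cosh_eq, sinh_eq]
  linear_combination -cos u ^ 2 * h

theorem sqrt_exp_two_mul_mul {x : ℝ} : √(exp (2 * t) * x) = exp t * √x := by
  rw [sqrt_mul (exp_nonneg _), ← exp_half, mul_div_cancel_left₀ t two_ne_zero]

theorem integral_inv_norm_cosh_sub_sinh_mul_exp_mul_I_pow_three :
    ∫ θ in (0:ℝ)..(2 * π), (‖(cosh t : ℂ) - sinh t * Complex.exp (θ * Complex.I)‖ ^ 3)⁻¹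
      = 4 * exp (-(3 * t)) * ∫ u in (0:ℝ)..(π / 2),
          (√(1 - (1 - exp (-(4 * t))) * sin u ^ 2) ^ 3)⁻¹ := by
  set m := 1 - exp (-(4 * t))
  have hm : m < 1 := by linarith [exp_pos (-(4 * t))]
  have hnorm (u : ℝ) : ‖(cosh t : ℂ) - sinh t * Complex.exp (↑(2 * u) * Complex.I)‖
      = exp t * √(1 - m * cos u ^ 2) := by
    rw [← sqrt_sq (norm_nonneg _), norm_cosh_sub_sinh_mul_exp_mul_I_sq,
      cosh_two_mul_sub_sinh_two_mul_mul_cos_two_mul, sqrt_exp_two_mul_mul]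
  have hexp : (exp t ^ 3)⁻¹ = exp (-(3 * t)) := by rw [← exp_nat_mul, ← exp_neg]; norm_num
  calc ∫ θ in (0:ℝ)..(2 * π), (‖(cosh t : ℂ) - sinh t * Complex.exp (θ * Complex.I)‖ ^ 3)⁻¹
      = 2 * ∫ u in (0:ℝ)..π,
          (‖(cosh t : ℂ) - sinh t * Complex.exp (↑(2 * u) * Complex.I)‖ ^ 3)⁻¹ := by
        simpa using (smul_integral_comp_mul_left (a := 0) (b := π)
          (fun θ : ℝ => (‖(cosh t : ℂ) - sinh t * Complex.exp (θ * Complex.I)‖ ^ 3)⁻¹) 2).symm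
    _ = 2 * (exp (-(3 * t)) * ∫ u in (0:ℝ)..π, (√(1 - m * cos u ^ 2) ^ 3)⁻¹) := by
        simp only [hnorm, mul_pow, mul_inv, hexp, integral_const_mul]
    _ = 4 * exp (-(3 * t)) * ∫ u in (0:ℝ)..(π / 2), (√(1 - m * sin u ^ 2) ^ 3)⁻¹ := by
        rw [integral_comp_cos_sq_zero_pi (fun x => (√(1 - m * x) ^ 3)⁻¹),
          integral_comp_sin_sq_zero_pi (f := fun x => (√(1 - m * x) ^ 3)⁻¹)
            (continuous_inv_sqrt_one_sub_mul_sin_sq_pow_three hm)]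
        ring

theorem integral_sqrt_exp_mul_cos_sq_add_exp_mul_sin_sq :
    ∫ θ in (0:ℝ)..(2 * π), √(exp (2 * t) * cos θ ^ 2 + exp (-(2 * t)) * sin θ ^ 2)
      = 4 * exp t * completeEllipticE (1 - exp (-(4 * t))) := by
  have h : exp (2 * t) * exp (-(4 * t)) = exp (-(2 * t)) := by rw [← exp_add]; ring_nf
  have harg (θ : ℝ) : exp (2 * t) * cos θ ^ 2 + exp (-(2 * t)) * sin θ ^ 2
      = exp (2 * t) * (1 - (1 - exp (-(4 * t))) * sin θ ^ 2) := by
    linear_combination exp (2 * t) * sin_sq_add_cos_sq θ - sin θ ^ 2 * h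
  simp only [harg, sqrt_exp_two_mul_mul, integral_const_mul]
  rw [integral_comp_sin_sq_zero_two_pi (f := fun x => √(1 - (1 - exp (-(4 * t))) * x))
    (by fun_prop), completeEllipticE]
  ring

end Kernels

/-- Comparison of the Delzant–Py kernel with the convex-bodies kernel: for `t ≥ 0`,
`(1/2π)∫₀^{2π} |cosh t - sinh t e^{iθ}|⁻³ dθ = (1/2π)∫₀^{2π} √(e^{2t}cos²θ + e^{-2t}sin²θ) dθ`,
both sides being equal to `(2eᵗ/π)·E(√(1-e^{-4t}))` with `E` the complete elliptic integral
of the second kind. -/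
theorem delzant_py_kernel_eq_convex_bodies_kernel (t : ℝ) (ht : 0 ≤ t) :
    (1 / (2 * π)) * (∫ θ in (0:ℝ)..(2 * π),
        (‖(Real.cosh t : ℂ) - Real.sinh t * Complex.exp (θ * Complex.I)‖ ^ 3)⁻¹) =
      (1 / (2 * π)) * (∫ θ in (0:ℝ)..(2 * π),
        Real.sqrt (Real.exp (2 * t) * cos θ ^ 2 + Real.exp (-(2 * t)) * sin θ ^ 2)) ∧
    (1 / (2 * π)) * (∫ θ in (0:ℝ)..(2 * π),
        (‖(Real.cosh t : ℂ) - Real.sinh t * Complex.exp (θ * Complex.I)‖ ^ 3)⁻¹) =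
      (2 * Real.exp t / π) *
        ∫ u in (0:ℝ)..(π / 2),
          Real.sqrt (1 - Real.sqrt (1 - Real.exp (-(4 * t))) ^ 2 * sin u ^ 2) := by
  have hm : 1 - exp (-(4 * t)) < 1 := by linarith [exp_pos (-(4 * t))]
  have hk : √(1 - exp (-(4 * t))) ^ 2 = 1 - exp (-(4 * t)) :=
    sq_sqrt (by linarith [exp_le_one_iff.2 (by linarith : -(4 * t) ≤ 0)])
  have hexp : exp (-(3 * t)) = exp t * exp (-(4 * t)) := by rw [← exp_add]; ring_nf
  have hDP : (1 / (2 * π)) * (∫ θ in (0:ℝ)..(2 * π),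
        (‖(cosh t : ℂ) - sinh t * Complex.exp (θ * Complex.I)‖ ^ 3)⁻¹)
      = (2 * exp t / π) * completeEllipticE (1 - exp (-(4 * t))) := by
    rw [integral_inv_norm_cosh_sub_sinh_mul_exp_mul_I_pow_three,
      completeEllipticE_eq_one_sub_mul_integral hm, sub_sub_cancel, hexp]
    field_simp
    ring
  rw [integral_sqrt_exp_mul_cos_sq_add_exp_mul_sin_sq, hDP, hk]
  exact ⟨by field_simp; ring, rfl⟩
end
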